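/- Let E be a finite-dimensional real inner product space and J : E × ℝ → ℝ be continuously differentiable, uniformly convex (m-strongly convex for some m > 0), bounded below, with Lipschitz-continuous gradient ∇J. Fix ρ ∈ (0,1/2) and σ ∈ (ρ,1). Let the alternating iterates (q^n, L^n) be generated as follows: (i) q^{n+1} = q^n + β^n p^n, where g^n = ∇_q J(q^n, L^n) is the partial gradient in q, the directions follow the PRP rule p^0 = -g^0, p^{n+1} = -g^{n+1} + α^{n+1} p^n with α^{n+1} = ⟨g^{n+1}, g^{n+1} - g^n⟩/‖g^n‖², and β^n minimizes β ↦ J(q^n + β p^n, L^n) over ℝ; (ii) L^{n+1} = L^n + λ^n d^n, where d^n = -∂J/∂L(q^{n+1}, L^n) and λ^n > 0 satisfies the Wolfe–Powell conditions ∂J/∂L(q^{n+1}, L^{n+1})·d^n ≥ σ ∂J/∂L(q^{n+1}, L^n)·d^n and J(q^{n+1}, L^{n+1}) ≤ J(q^{n+1}, L^n) - ρ λ^n (d^n)². Then liminf_{n→∞} (‖g^n‖ + |d^n|) = 0. -/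

import Mathlib

/-!
Both half-steps decrease `J`, so `J (qⁿ, Lⁿ)` converges and the decrements of the two half-steps
tend to zero. Strong convexity and the Wolfe–Powell conditions turn this into `dⁿ → 0`,
`λⁿ dⁿ → 0` and `qⁿ⁺¹ - qⁿ → 0`, hence `gⁿ⁺¹ - gⁿ → 0` by Lipschitz continuity of `∇J`.
If `‖gⁿ‖ ≥ ε` for all large `n`, the PRP coefficients therefore tend to zero, the directions `pⁿ`
stay bounded and, since exact line search makes `pⁿ` orthogonal to `∇_q J (qⁿ⁺¹, Lⁿ)`, they
satisfy `⟪gⁿ, pⁿ⟫ ≤ -ε² / 2`. The descent lemma then bounds the decrease of every exact line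
search from below by a positive constant, a contradiction.
-/

open scoped RealInnerProductSpace

open Filter Topology

theorem abs_le_mul_add_of_sq_add_sq_le {a b c d M : ℝ} (hM : 0 ≤ M)
    (h : a ^ 2 + b ^ 2 ≤ M ^ 2 * (c ^ 2 + d ^ 2)) : |a| ≤ M * (|c| + |d|) := by
  refine abs_le_of_sq_le_sq ?_ (by positivity)
  nlinarith [sq_nonneg b, sq_abs c, sq_abs d,
    mul_nonneg (sq_nonneg M) (mul_nonneg (abs_nonneg c) (abs_nonneg d))]

theorem norm_sub_le_and_abs_sub_le_of_lipschitz_prod {E F : Type*} [SeminormedAddCommGroup E]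
    [SeminormedAddCommGroup F] {gx : E → ℝ → F} {gl : E → ℝ → ℝ} {M : ℝ} (hM : 0 ≤ M)
    (hLip : ∀ w z : E × ℝ, ‖gx w.1 w.2 - gx z.1 z.2‖ ^ 2 + (gl w.1 w.2 - gl z.1 z.2) ^ 2 ≤
      M ^ 2 * (‖w.1 - z.1‖ ^ 2 + (w.2 - z.2) ^ 2)) (x y : E) (l l' : ℝ) :
    ‖gx x l - gx y l'‖ ≤ M * (‖x - y‖ + |l - l'|) ∧
      |gl x l - gl y l'| ≤ M * (‖x - y‖ + |l - l'|) := by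
  have h := hLip (x, l) (y, l')
  constructor
  · simpa using abs_le_mul_add_of_sq_add_sq_le hM h
  · simpa using abs_le_mul_add_of_sq_add_sq_le hM ((add_comm _ _).trans_le h)

theorem tendsto_zero_of_le_sub_succ {u a : ℕ → ℝ} (ha : ∀ n, 0 ≤ a n)
    (hu : ∀ n, a n ≤ u n - u (n + 1)) (hB : BddBelow (Set.range u)) :
    Tendsto a atTop (𝓝 0) := by
  obtain ⟨B, hB⟩ := hB
  refine (summable_of_sum_range_le (c := u 0 - B) ha fun n => ?_).tendsto_atTop_zero
  calc ∑ i ∈ Finset.range n, a i ≤ ∑ i ∈ Finset.range n, (u i - u (i + 1)) :=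
        Finset.sum_le_sum fun i _ => hu i
    _ = u 0 - u n := Finset.sum_range_sub' u n
    _ ≤ u 0 - B := by linarith [hB ⟨n, rfl⟩]

theorem tendsto_abs_of_mul_sq_le {x y : ℕ → ℝ} {c : ℝ} (hc : 0 < c)
    (h : ∀ n, c * x n ^ 2 ≤ y n) (hy : Tendsto y atTop (𝓝 0)) :
    Tendsto (fun n => |x n|) atTop (𝓝 0) := by
  have hx2 : Tendsto (fun n => x n ^ 2) atTop (𝓝 0) :=
    squeeze_zero (fun n => sq_nonneg _) (fun n => (le_div_iff₀' hc).2 (h n))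
      (by simpa using hy.div_const c)
  simpa [Real.sqrt_sq_eq_abs] using hx2.sqrt

theorem exists_eventually_le_of_le_add_half {u : ℕ → ℝ} {c : ℝ}
    (h : ∀ᶠ n in atTop, u (n + 1) ≤ c + u n / 2) : ∃ P, ∀ᶠ n in atTop, u n ≤ P := by
  obtain ⟨N, hN⟩ := eventually_atTop.1 h
  refine ⟨max (u N) (2 * c), eventually_atTop.2 ⟨N, fun n hn => ?_⟩⟩
  induction n, hn using Nat.le_induction with
  | base => exact le_max_left _ _
  | succ n hn ih => linarith [hN n hn, le_max_right (u N) (2 * c)]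

theorem liminf_eq_zero_of_frequently_lt {u : ℕ → ℝ} (h0 : ∀ n, 0 ≤ u n)
    (h : ∀ ε > 0, ∃ᶠ n in atTop, u n < ε) : liminf u atTop = 0 := by
  have hcobdd : IsCoboundedUnder (· ≥ ·) atTop u :=
    ⟨1, fun a ha => by
      by_contra! h1
      exact ((h 1 one_pos).and_eventually (eventually_map.1 ha)).exists.elim
        fun n hn => by linarith [hn.1, hn.2]⟩
  refine le_antisymm (le_of_forall_pos_le_add fun ε hε => ?_)
    (le_liminf_of_le hcobdd (.of_forall h0))
  rw [zero_add]
  exact liminf_le_of_frequently_le ((h ε hε).mono fun n hn => hn.le) (isBoundedUnder_of ⟨0, h0⟩)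

theorem one_sub_mul_sq_le_of_curvature {φ' : ℝ → ℝ} {M σ l lam d : ℝ}
    (hφ' : ∀ x y, |φ' x - φ' y| ≤ M * |x - y|) (hlam : 0 ≤ lam) (hd : d = -φ' l)
    (hcurv : σ * (φ' l * d) ≤ φ' (l + lam * d) * d) :
    (1 - σ) * d ^ 2 ≤ M * (lam * d ^ 2) := by
  have h := hφ' (l + lam * d) l
  rw [add_sub_cancel_left, abs_mul, abs_of_nonneg hlam] at h
  have h' : (φ' (l + lam * d) - φ' l) * d ≤ M * (lam * d ^ 2) :=
    calc (φ' (l + lam * d) - φ' l) * d ≤ |φ' (l + lam * d) - φ' l| * |d| := by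
          rw [← abs_mul]; exact le_abs_self _
      _ ≤ M * (lam * |d|) * |d| := by gcongr
      _ = M * (lam * d ^ 2) := by rw [sq, ← abs_mul_abs_self d]; ring
  rw [show φ' l = -d by linarith] at hcurv h'
  nlinarith

theorem mul_abs_le_of_sufficient_decrease {φ φ' : ℝ → ℝ} {m ρ l lam d : ℝ} (hm : 0 < m)
    (hconv : φ l + φ' l * (lam * d) + m / 2 * (lam * d) ^ 2 ≤ φ (l + lam * d))
    (hlam : 0 < lam) (hd : d = -φ' l) (hdec : φ (l + lam * d) ≤ φ l - ρ * lam * d ^ 2) :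
    lam * |d| ≤ 2 * (1 - ρ) / m * |d| := by
  rcases eq_or_ne d 0 with rfl | hd0
  · simp
  gcongr
  rw [le_div_iff₀ hm]
  rw [show φ' l = -d by linarith] at hconv
  have : 0 < lam * d ^ 2 := by positivity
  nlinarith

section Gradient

variable {E : Type*} [NormedAddCommGroup E] [InnerProductSpace ℝ E] [CompleteSpace E]

theorem HasGradientAt.hasDerivAt_comp_add_smul {f : E → ℝ} {f' x v : E} {b : ℝ}
    (hf : HasGradientAt f f' (x + b • v)) :
    HasDerivAt (fun b : ℝ => f (x + b • v)) ⟪f', v⟫ b := by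
  have hline : HasDerivAt (fun b : ℝ => x + b • v) v b := by
    simpa using ((hasDerivAt_id b).smul_const v).const_add x
  have h := hf.hasFDerivAt.comp_hasDerivAt b hline
  simp only [Function.comp_def, InnerProductSpace.toDual_apply_apply] at h
  exact h

theorem inner_gradient_eq_zero_of_forall_le_line {f : E → ℝ} {f' x v : E} {β : ℝ}
    (hf : HasGradientAt f f' (x + β • v)) (hmin : ∀ b : ℝ, f (x + β • v) ≤ f (x + b • v)) :
    ⟪f', v⟫ = 0 :=
  IsLocalMin.hasDerivAt_eq_zero (.of_forall hmin) hf.hasDerivAt_comp_add_smul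

theorem image_add_smul_le_of_lipschitz_gradient {f : E → ℝ} {f' : E → E} {M : ℝ} (hM : 0 ≤ M)
    (hf : ∀ x, HasGradientAt f (f' x) x) (hf' : ∀ x y, ‖f' x - f' y‖ ≤ M * ‖x - y‖)
    (x v : E) (t : ℝ) : f (x + t • v) ≤ f x + t * ⟪f' x, v⟫ + M * t ^ 2 * ‖v‖ ^ 2 := by
  set φ : ℝ → ℝ := fun b => f (x + b • v) - b * ⟪f' x, v⟫
  have hφ : ∀ b, HasDerivAt φ ⟪f' (x + b • v) - f' x, v⟫ b := fun b => by
    have h : HasDerivAt (fun b : ℝ => f (x + b • v)) ⟪f' (x + b • v), v⟫ b :=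
      (hf _).hasDerivAt_comp_add_smul
    have h' := h.sub (hasDerivAt_mul_const ⟪f' x, v⟫)
    rw [← inner_sub_left] at h'
    exact h'
  have hbound : ∀ b ∈ Set.uIcc 0 t, ‖⟪f' (x + b • v) - f' x, v⟫‖ ≤ M * |t| * ‖v‖ ^ 2 := by
    intro b hb
    have hb' : |b| ≤ |t| := by simpa using Set.abs_sub_left_of_mem_uIcc hb
    calc ‖⟪f' (x + b • v) - f' x, v⟫‖ ≤ ‖f' (x + b • v) - f' x‖ * ‖v‖ := norm_inner_le_norm _ _
      _ ≤ M * (|b| * ‖v‖) * ‖v‖ := by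
          gcongr
          simpa [norm_smul] using hf' (x + b • v) x
      _ = M * ‖v‖ ^ 2 * |b| := by ring
      _ ≤ M * ‖v‖ ^ 2 * |t| := by gcongr
      _ = M * |t| * ‖v‖ ^ 2 := by ring
  have := Convex.norm_image_sub_le_of_norm_hasDerivWithin_le (fun b _ => (hφ b).hasDerivWithinAt)
    hbound (convex_uIcc 0 t) Set.left_mem_uIcc Set.right_mem_uIcc
  simp only [φ, zero_smul, add_zero, zero_mul, sub_zero, Real.norm_eq_abs] at this
  have hsq : M * |t| * ‖v‖ ^ 2 * |t| = M * t ^ 2 * ‖v‖ ^ 2 := by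
    rw [← sq_abs t]; ring
  rw [hsq] at this
  linarith [le_abs_self (f (x + t • v) - t * ⟪f' x, v⟫ - f x)]

theorem sq_inner_gradient_le_of_forall_le_line {f : E → ℝ} {f' : E → E} {M : ℝ} (hM : 0 < M)
    (hf : ∀ x, HasGradientAt f (f' x) x) (hf' : ∀ x y, ‖f' x - f' y‖ ≤ M * ‖x - y‖)
    {x v : E} {c : ℝ} (hc : ∀ b : ℝ, c ≤ f (x + b • v)) :
    ⟪f' x, v⟫ ^ 2 ≤ 4 * M * ‖v‖ ^ 2 * (f x - c) := by
  rcases eq_or_ne v 0 with rfl | hv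
  · simp
  -- the step minimizing the quadratic upper bound of the descent lemma
  have hk : 0 < 2 * M * ‖v‖ ^ 2 := by positivity
  have h := (hc _).trans (image_add_smul_le_of_lipschitz_gradient hM.le hf hf' x v
    (-⟪f' x, v⟫ / (2 * M * ‖v‖ ^ 2)))
  have hquad : -⟪f' x, v⟫ / (2 * M * ‖v‖ ^ 2) * ⟪f' x, v⟫ +
      M * (-⟪f' x, v⟫ / (2 * M * ‖v‖ ^ 2)) ^ 2 * ‖v‖ ^ 2 =
      -(⟪f' x, v⟫ ^ 2 / (4 * M * ‖v‖ ^ 2)) := by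
    field_simp; ring
  rw [add_assoc, hquad, ← sub_eq_add_neg, le_sub_iff_add_le, ← le_sub_iff_add_le',
    div_le_iff₀ (by positivity)] at h
  linarith

theorem sq_norm_gradient_le_of_forall_le {f : E → ℝ} {f' : E → E} {M : ℝ} (hM : 0 < M)
    (hf : ∀ x, HasGradientAt f (f' x) x) (hf' : ∀ x y, ‖f' x - f' y‖ ≤ M * ‖x - y‖)
    {B : ℝ} (hB : ∀ y, B ≤ f y) (x : E) : ‖f' x‖ ^ 2 ≤ 4 * M * (f x - B) := by
  have h := (hB _).trans (image_add_smul_le_of_lipschitz_gradient hM.le hf hf' x (f' x)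
    (-1 / (2 * M)))
  rw [real_inner_self_eq_norm_sq] at h
  have hquad : -1 / (2 * M) * ‖f' x‖ ^ 2 + M * (-1 / (2 * M)) ^ 2 * ‖f' x‖ ^ 2 =
      -(‖f' x‖ ^ 2 / (4 * M)) := by
    field_simp; ring
  rw [add_assoc, hquad, ← sub_eq_add_neg, le_sub_iff_add_le, ← le_sub_iff_add_le',
    div_le_iff₀ (by positivity)] at h
  linarith

theorem sq_norm_smul_le_of_forall_le_line {f : E → ℝ} {f' : E → E} {m : ℝ}
    (hf : ∀ x, HasGradientAt f (f' x) x)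
    (hconv : ∀ x y, f x + ⟪f' x, y - x⟫ + m / 2 * ‖y - x‖ ^ 2 ≤ f y)
    {x v : E} {β : ℝ} (hmin : ∀ b : ℝ, f (x + β • v) ≤ f (x + b • v)) :
    m / 2 * ‖β • v‖ ^ 2 ≤ f x - f (x + β • v) := by
  have h := hconv (x + β • v) x
  rw [show x - (x + β • v) = -(β • v) by abel, inner_neg_right, real_inner_smul_right,
    inner_gradient_eq_zero_of_forall_le_line (hf _) hmin, norm_neg] at h
  linarith

end Gradient

namespace PRP

variable {E : Type*} [NormedAddCommGroup E] [InnerProductSpace ℝ E]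
  {g p : ℕ → E} {α : ℕ → ℝ} {G ε : ℝ}

theorem tendsto_coeff_zero (hα : ∀ n, α (n + 1) = ⟪g (n + 1), g (n + 1) - g n⟫ / ‖g n‖ ^ 2)
    (hG : ∀ n, ‖g n‖ ≤ G) (hΔg : Tendsto (fun n => ‖g (n + 1) - g n‖) atTop (𝓝 0))
    (hε : 0 < ε) (hgε : ∀ᶠ n in atTop, ε ≤ ‖g n‖) :
    Tendsto (fun n => α (n + 1)) atTop (𝓝 0) := by
  refine squeeze_zero_norm' (hgε.mono fun n hn => ?_) (by simpa using hΔg.const_mul (G / ε ^ 2))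
  have hgn : ε ^ 2 ≤ ‖g n‖ ^ 2 := pow_le_pow_left₀ hε.le hn 2
  rw [hα, norm_div, norm_pow, norm_norm, Real.norm_eq_abs,
    div_le_iff₀ (pow_pos (hε.trans_le hn) 2)]
  calc |⟪g (n + 1), g (n + 1) - g n⟫| ≤ G * ‖g (n + 1) - g n‖ :=
        (abs_real_inner_le_norm _ _).trans (by gcongr; exact hG _)
    _ ≤ G * ‖g (n + 1) - g n‖ * (‖g n‖ ^ 2 / ε ^ 2) :=
        le_mul_of_one_le_right (mul_nonneg ((norm_nonneg _).trans (hG 0)) (norm_nonneg _))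
          ((one_le_div (by positivity)).2 hgn)
    _ = G / ε ^ 2 * ‖g (n + 1) - g n‖ * ‖g n‖ ^ 2 := by ring

theorem exists_eventually_norm_le (hp : ∀ n, p (n + 1) = -g (n + 1) + α (n + 1) • p n)
    (hG : ∀ n, ‖g n‖ ≤ G) (hα : ∀ᶠ n in atTop, |α (n + 1)| ≤ 1 / 2) :
    ∃ P, ∀ᶠ n in atTop, ‖p n‖ ≤ P :=
  exists_eventually_le_of_le_add_half <| hα.mono fun n hn => by
    rw [hp, ← sub_eq_neg_add]
    calc ‖α (n + 1) • p n - g (n + 1)‖ ≤ |α (n + 1)| * ‖p n‖ + ‖g (n + 1)‖ := by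
          simpa [norm_smul] using norm_sub_le (α (n + 1) • p n) (g (n + 1))
      _ ≤ G + ‖p n‖ / 2 := by nlinarith [hG (n + 1), norm_nonneg (p n)]

theorem eventually_inner_le (hp : ∀ n, p (n + 1) = -g (n + 1) + α (n + 1) • p n)
    (hα : Tendsto (fun n => α (n + 1)) atTop (𝓝 0)) {e : ℕ → ℝ} (he : Tendsto e atTop (𝓝 0))
    (he0 : ∀ n, 0 ≤ e n) (hconj : ∀ n, |⟪g (n + 1), p n⟫| ≤ e n * ‖p n‖)
    {P : ℝ} (hP : ∀ᶠ n in atTop, ‖p n‖ ≤ P)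
    (hε : 0 < ε) (hgε : ∀ᶠ n in atTop, ε ≤ ‖g n‖) :
    ∀ᶠ n in atTop, ⟪g n, p n⟫ ≤ -(ε ^ 2 / 2) := by
  have hsmall : ∀ᶠ n in atTop, |α (n + 1)| * (e n * P) < ε ^ 2 / 2 := by
    refine Tendsto.eventually_lt_const (by positivity) ?_
    simpa using hα.abs.mul (he.mul_const P)
  rw [← map_add_atTop_eq_nat 1, eventually_map]
  filter_upwards [hsmall, hP, (tendsto_add_atTop_nat 1).eventually hgε] with n hn hPn hgn
  have hexp : ⟪g (n + 1), p (n + 1)⟫ = -‖g (n + 1)‖ ^ 2 + α (n + 1) * ⟪g (n + 1), p n⟫ := by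
    rw [hp, inner_add_right, inner_neg_right, real_inner_self_eq_norm_sq, real_inner_smul_right]
  have hconj' : α (n + 1) * ⟪g (n + 1), p n⟫ ≤ |α (n + 1)| * (e n * P) :=
    calc α (n + 1) * ⟪g (n + 1), p n⟫ ≤ |α (n + 1)| * |⟪g (n + 1), p n⟫| := by
          rw [← abs_mul]; exact le_abs_self _
      _ ≤ |α (n + 1)| * (e n * P) := by
          gcongr
          exact (hconj n).trans (mul_le_mul_of_nonneg_left hPn (he0 n))
  rw [hexp]
  nlinarith [sq_le_sq' (by linarith [norm_nonneg (g (n + 1))]) hgn]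

theorem frequently_norm_lt (hα : ∀ n, α (n + 1) = ⟪g (n + 1), g (n + 1) - g n⟫ / ‖g n‖ ^ 2)
    (hp : ∀ n, p (n + 1) = -g (n + 1) + α (n + 1) • p n) (hG : ∀ n, ‖g n‖ ≤ G)
    (hΔg : Tendsto (fun n => ‖g (n + 1) - g n‖) atTop (𝓝 0))
    {e : ℕ → ℝ} (he : Tendsto e atTop (𝓝 0)) (he0 : ∀ n, 0 ≤ e n)
    (hconj : ∀ n, |⟪g (n + 1), p n⟫| ≤ e n * ‖p n‖)
    {K : ℝ} (hK : 0 ≤ K) {a : ℕ → ℝ} (ha : Tendsto a atTop (𝓝 0))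
    (hdesc : ∀ n, ⟪g n, p n⟫ ^ 2 ≤ K * ‖p n‖ ^ 2 * a n) (hε : 0 < ε) :
    ∃ᶠ n in atTop, ‖g n‖ < ε := by
  by_contra h
  have hgε : ∀ᶠ n in atTop, ε ≤ ‖g n‖ := (not_frequently.1 h).mono fun n hn => not_lt.1 hn
  have hα0 := tendsto_coeff_zero hα hG hΔg hε hgε
  obtain ⟨P, hP⟩ :=
    exists_eventually_norm_le hp hG (hα0.abs.eventually (Iic_mem_nhds (by norm_num)))
  have hsmall : ∀ᶠ n in atTop, K * P ^ 2 * a n < ε ^ 4 / 4 :=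
    (show Tendsto (fun n => K * P ^ 2 * a n) atTop (𝓝 0) by
      simpa using ha.const_mul (K * P ^ 2)).eventually_lt_const (by positivity)
  obtain ⟨n, hinner, hPn, hKa⟩ :=
    ((eventually_inner_le hp hα0 he he0 hconj hP hε hgε).and (hP.and hsmall)).exists
  have hεa : ε ^ 4 / 4 ≤ K * ‖p n‖ ^ 2 * a n := by nlinarith [hdesc n, sq_nonneg (ε ^ 2)]
  have ha0 : 0 < a n :=
    pos_of_mul_pos_right (a := K * ‖p n‖ ^ 2) (by linarith [pow_pos hε 4]) (by positivity)
  have hPa : K * ‖p n‖ ^ 2 * a n ≤ K * P ^ 2 * a n := by gcongr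
  linarith

end PRP

-- In the scheme, `u n = J (qⁿ, Lⁿ)`, `v n = J (qⁿ⁺¹, Lⁿ)` and `s n = qⁿ⁺¹ - qⁿ`.
theorem liminf_norm_add_abs_eq_zero_of_descent {E : Type*} [NormedAddCommGroup E]
    [InnerProductSpace ℝ E] {g p s : ℕ → E} {α u v lam d : ℕ → ℝ} {m M ρ σ C K B : ℝ}
    (hm : 0 < m) (hM : 0 ≤ M) (hρ : 0 < ρ) (hσ : σ < 1) (hK : 0 ≤ K) (hlam : ∀ n, 0 ≤ lam n)
    (hB : ∀ n, B ≤ u n) (hqdec : ∀ n, m / 2 * ‖s n‖ ^ 2 ≤ u n - v n)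
    (hLdec : ∀ n, u (n + 1) ≤ v n - ρ * lam n * d n ^ 2)
    (hcurv : ∀ n, (1 - σ) * d n ^ 2 ≤ M * (lam n * d n ^ 2))
    (hstep : ∀ n, lam n * |d n| ≤ C * |d n|)
    (hgB : ∀ n, ‖g n‖ ^ 2 ≤ K * (u n - B))
    (hgp : ∀ n, ⟪g n, p n⟫ ^ 2 ≤ K * ‖p n‖ ^ 2 * (u n - v n))
    (hΔg : ∀ n, ‖g (n + 1) - g n‖ ≤ M * (‖s n‖ + lam n * |d n|))
    (hconj : ∀ n, |⟪g (n + 1), p n⟫| ≤ M * (lam n * |d n|) * ‖p n‖)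
    (hα : ∀ n, α (n + 1) = ⟪g (n + 1), g (n + 1) - g n⟫ / ‖g n‖ ^ 2)
    (hp : ∀ n, p (n + 1) = -g (n + 1) + α (n + 1) • p n) :
    liminf (fun n => ‖g n‖ + |d n|) atTop = 0 := by
  have hqdec0 n : 0 ≤ u n - v n := (by positivity : 0 ≤ m / 2 * ‖s n‖ ^ 2).trans (hqdec n)
  have hLdec0 n : 0 ≤ ρ * lam n * d n ^ 2 := by have := hlam n; positivity
  have hu : BddBelow (Set.range u) := ⟨B, by rintro _ ⟨n, rfl⟩; exact hB n⟩
  have hqdec_lim : Tendsto (fun n => u n - v n) atTop (𝓝 0) :=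
    tendsto_zero_of_le_sub_succ hqdec0 (fun n => by linarith [hLdec n, hLdec0 n]) hu
  have hLdec_lim : Tendsto (fun n => ρ * lam n * d n ^ 2) atTop (𝓝 0) :=
    tendsto_zero_of_le_sub_succ hLdec0 (fun n => by linarith [hLdec n, hqdec0 n]) hu
  have hd : Tendsto (fun n => |d n|) atTop (𝓝 0) :=
    tendsto_abs_of_mul_sq_le (y := fun n => M * (ρ * lam n * d n ^ 2))
      (mul_pos (sub_pos.2 hσ) hρ) (fun n => by nlinarith [hcurv n])
      (by simpa using hLdec_lim.const_mul M)
  have hs : Tendsto (fun n => ‖s n‖) atTop (𝓝 0) := by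
    simpa using tendsto_abs_of_mul_sq_le (by positivity) hqdec hqdec_lim
  have hLstep : Tendsto (fun n => lam n * |d n|) atTop (𝓝 0) :=
    squeeze_zero (fun n => mul_nonneg (hlam n) (abs_nonneg _)) hstep
      (by simpa using hd.const_mul C)
  have hG n : ‖g n‖ ≤ √(K * (u 0 - B)) := by
    have hun : u n ≤ u 0 := antitone_nat_of_succ_le
      (fun n => by linarith [hLdec n, hLdec0 n, hqdec0 n]) (Nat.zero_le n)
    exact Real.le_sqrt_of_sq_le ((hgB n).trans (by gcongr))
  have hg : ∀ ε > 0, ∃ᶠ n in atTop, ‖g n‖ < ε := fun ε hε =>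
    PRP.frequently_norm_lt hα hp hG
      (squeeze_zero (fun n => norm_nonneg _) hΔg (by simpa using (hs.add hLstep).const_mul M))
      (by simpa using hLstep.const_mul M)
      (fun n => mul_nonneg hM (mul_nonneg (hlam n) (abs_nonneg _))) hconj hK hqdec_lim hgp hε
  refine liminf_eq_zero_of_frequently_lt (fun n => by positivity) fun ε hε => ?_
  exact ((hg (ε / 2) (half_pos hε)).and_eventually (hd.eventually_lt_const (half_pos hε))).mono
    fun n hn => by linarith [hn.1, hn.2]

theorem alternating_scheme_convergence_general
    {E : Type*} [NormedAddCommGroup E] [InnerProductSpace ℝ E] [FiniteDimensional ℝ E]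
    (J : E × ℝ → ℝ) (hJ : ContDiff ℝ 1 J)
    -- partial gradients of J
    (gradq : E → ℝ → E) (gradL : E → ℝ → ℝ)
    (hgradq : ∀ (x : E) (l : ℝ), gradq x l = gradient (fun x' => J (x', l)) x)
    -- J is uniformly (m-strongly) convex
    (m : ℝ) (hm : 0 < m)
    (hconv : ∀ w z : E × ℝ,
      J w + ⟪gradq w.1 w.2, z.1 - w.1⟫ + gradL w.1 w.2 * (z.2 - w.2) +
          (m / 2) * (‖z.1 - w.1‖ ^ 2 + (z.2 - w.2) ^ 2) ≤ J z)
    -- J is bounded below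
    (hbdd : BddBelow (Set.range J))
    -- the gradient of J is Lipschitz continuous
    (M : ℝ) (hM : 0 < M)
    (hLip : ∀ w z : E × ℝ,
      ‖gradq w.1 w.2 - gradq z.1 z.2‖ ^ 2 + (gradL w.1 w.2 - gradL z.1 z.2) ^ 2 ≤
        M ^ 2 * (‖w.1 - z.1‖ ^ 2 + (w.2 - z.2) ^ 2))
    -- Wolfe–Powell parameters
    (ρ σ : ℝ) (hρ : ρ ∈ Set.Ioo (0 : ℝ) (1 / 2)) (hσ : σ ∈ Set.Ioo ρ 1)
    -- the alternating iterates
    (q p g : ℕ → E) (L β α lam d : ℕ → ℝ)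
    -- (i) PRP update of q with exact line search
    (hg : ∀ n, g n = gradq (q n) (L n))
    (hq : ∀ n, q (n + 1) = q n + β n • p n)
    (hα : ∀ n, α (n + 1) = ⟪g (n + 1), g (n + 1) - g n⟫ / ‖g n‖ ^ 2)
    (hp : ∀ n, p (n + 1) = -g (n + 1) + α (n + 1) • p n)
    (hls : ∀ n, ∀ b : ℝ, J (q n + β n • p n, L n) ≤ J (q n + b • p n, L n))
    -- (ii) steepest descent update of L with Wolfe–Powell step sizes
    (hd : ∀ n, d n = -gradL (q (n + 1)) (L n))
    (hL : ∀ n, L (n + 1) = L n + lam n * d n)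
    (hlam : ∀ n, 0 < lam n)
    (hcurv : ∀ n, σ * (gradL (q (n + 1)) (L n) * d n) ≤
      gradL (q (n + 1)) (L (n + 1)) * d n)
    (hdec : ∀ n, J (q (n + 1), L (n + 1)) ≤ J (q (n + 1), L n) - ρ * lam n * (d n) ^ 2) :
    Filter.liminf (fun n => ‖g n‖ + |d n|) Filter.atTop = 0 := by
  obtain ⟨hρ0, -⟩ := hρ
  obtain ⟨-, hσ1⟩ := hσ
  obtain ⟨B, hB⟩ := hbdd
  have hgq l x : HasGradientAt (fun x => J (x, l)) (gradq x l) x := by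
    rw [hgradq]
    exact ((hJ.differentiable one_ne_zero (x, l)).comp x
      (differentiableAt_id.prodMk (differentiableAt_const l))).hasGradientAt
  have hLip' := norm_sub_le_and_abs_sub_le_of_lipschitz_prod hM.le hLip
  have hLq l x y : ‖gradq x l - gradq y l‖ ≤ M * ‖x - y‖ := by simpa using (hLip' x y l l).1
  have hLL x l l' : |gradL x l - gradL x l'| ≤ M * |l - l'| := by simpa using (hLip' x x l l').2
  have hcq l x y : J (x, l) + ⟪gradq x l, y - x⟫ + m / 2 * ‖y - x‖ ^ 2 ≤ J (y, l) := by
    simpa using hconv (x, l) (y, l)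
  have hqdec n : m / 2 * ‖β n • p n‖ ^ 2 ≤ J (q n, L n) - J (q (n + 1), L n) := by
    rw [hq]
    exact sq_norm_smul_le_of_forall_le_line (hgq _) (hcq _) (hls n)
  have hgp n : ⟪g n, p n⟫ ^ 2 ≤ 4 * M * ‖p n‖ ^ 2 * (J (q n, L n) - J (q (n + 1), L n)) := by
    rw [hg, hq]
    exact sq_inner_gradient_le_of_forall_le_line hM (hgq _) (hLq _) (hls n)
  have hgB n : ‖g n‖ ^ 2 ≤ 4 * M * (J (q n, L n) - B) := by
    rw [hg]
    exact sq_norm_gradient_le_of_forall_le hM (hgq _) (hLq _) (fun y => hB ⟨_, rfl⟩) _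
  have hcurv' n : (1 - σ) * d n ^ 2 ≤ M * (lam n * d n ^ 2) :=
    one_sub_mul_sq_le_of_curvature (hLL _) (hlam n).le (hd n) (hL n ▸ hcurv n)
  have hstep n : lam n * |d n| ≤ 2 * (1 - ρ) / m * |d n| :=
    mul_abs_le_of_sufficient_decrease (φ := fun l => J (q (n + 1), l)) hm
      (by simpa [hL n] using hconv (q (n + 1), L n) (q (n + 1), L (n + 1)))
      (hlam n) (hd n) (hL n ▸ hdec n)
  have hΔg n : ‖g (n + 1) - g n‖ ≤ M * (‖β n • p n‖ + lam n * |d n|) := by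
    simpa [hg, hq, hL, abs_mul, abs_of_pos (hlam n)] using
      (hLip' (q (n + 1)) (q n) (L (n + 1)) (L n)).1
  have hconj n : |⟪g (n + 1), p n⟫| ≤ M * (lam n * |d n|) * ‖p n‖ := by
    have horth : ⟪gradq (q (n + 1)) (L n), p n⟫ = 0 := by
      rw [hq]
      exact inner_gradient_eq_zero_of_forall_le_line (hgq _ _) (hls n)
    rw [hg, ← sub_zero ⟪_, p n⟫, ← horth, ← inner_sub_left]
    refine (abs_real_inner_le_norm _ _).trans (mul_le_mul_of_nonneg_right ?_ (norm_nonneg _))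
    simpa [hL, abs_mul, abs_of_pos (hlam n)] using
      (hLip' (q (n + 1)) (q (n + 1)) (L (n + 1)) (L n)).1
  exact liminf_norm_add_abs_eq_zero_of_descent (u := fun n => J (q n, L n))
    (v := fun n => J (q (n + 1), L n)) hm hM.le hρ0 hσ1 (by positivity) (fun n => (hlam n).le)
    (fun n => hB ⟨_, rfl⟩) hqdec hdec hcurv' hstep hgB hgp hΔg hconj hα hp

/-- Convergence of the alternating iteration scheme combining
the PRP conjugate gradient update in `q` (with exact line search) and the
steepest descent update in `L` (with Wolfe–Powell step sizes) applied to a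
continuously differentiable, uniformly (strongly) convex objective
`J : E × ℝ → ℝ` that is bounded below and has a Lipschitz continuous gradient:
`liminf_{n→∞} (‖g^n‖ + |d^n|) = 0`. Here `g^n = ∇_q J(q^n, L^n)` and
`d^n = -∂J/∂L(q^{n+1}, L^n)`. -/
theorem alternating_scheme_convergence
    {E : Type*} [NormedAddCommGroup E] [InnerProductSpace ℝ E] [FiniteDimensional ℝ E]
    (J : E × ℝ → ℝ) (hJ : ContDiff ℝ 1 J)
    -- partial gradients of J
    (gradq : E → ℝ → E) (gradL : E → ℝ → ℝ)
    (hgradq : ∀ (x : E) (l : ℝ), gradq x l = gradient (fun x' => J (x', l)) x)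
    (hgradL : ∀ (x : E) (l : ℝ), gradL x l = deriv (fun l' => J (x, l')) l)
    -- J is uniformly (m-strongly) convex
    (m : ℝ) (hm : 0 < m)
    (hconv : ∀ w z : E × ℝ,
      J w + ⟪gradq w.1 w.2, z.1 - w.1⟫ + gradL w.1 w.2 * (z.2 - w.2) +
          (m / 2) * (‖z.1 - w.1‖ ^ 2 + (z.2 - w.2) ^ 2) ≤ J z)
    -- J is bounded below
    (hbdd : BddBelow (Set.range J))
    -- the gradient of J is Lipschitz continuous
    (M : ℝ) (hM : 0 < M)
    (hLip : ∀ w z : E × ℝ,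
      ‖gradq w.1 w.2 - gradq z.1 z.2‖ ^ 2 + (gradL w.1 w.2 - gradL z.1 z.2) ^ 2 ≤
        M ^ 2 * (‖w.1 - z.1‖ ^ 2 + (w.2 - z.2) ^ 2))
    -- Wolfe–Powell parameters
    (ρ σ : ℝ) (hρ : ρ ∈ Set.Ioo (0 : ℝ) (1 / 2)) (hσ : σ ∈ Set.Ioo ρ 1)
    -- the alternating iterates
    (q p g : ℕ → E) (L β α lam d : ℕ → ℝ)
    -- (i) PRP update of q with exact line search
    (hg : ∀ n, g n = gradq (q n) (L n))
    (hq : ∀ n, q (n + 1) = q n + β n • p n)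
    (hp0 : p 0 = -g 0)
    (hα : ∀ n, α (n + 1) = ⟪g (n + 1), g (n + 1) - g n⟫ / ‖g n‖ ^ 2)
    (hp : ∀ n, p (n + 1) = -g (n + 1) + α (n + 1) • p n)
    (hls : ∀ n, ∀ b : ℝ, J (q n + β n • p n, L n) ≤ J (q n + b • p n, L n))
    -- (ii) steepest descent update of L with Wolfe–Powell step sizes
    (hd : ∀ n, d n = -gradL (q (n + 1)) (L n))
    (hL : ∀ n, L (n + 1) = L n + lam n * d n)
    (hlam : ∀ n, 0 < lam n)
    (hcurv : ∀ n, σ * (gradL (q (n + 1)) (L n) * d n) ≤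
      gradL (q (n + 1)) (L (n + 1)) * d n)
    (hdec : ∀ n, J (q (n + 1), L (n + 1)) ≤ J (q (n + 1), L n) - ρ * lam n * (d n) ^ 2) :
    Filter.liminf (fun n => ‖g n‖ + |d n|) Filter.atTop = 0 :=
  alternating_scheme_convergence_general J hJ gradq gradL hgradq m hm hconv hbdd M hM hLip ρ σ hρ hσ
    q p g L β α lam d hg hq hα hp hls hd hL hlam hcurv hdec
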